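/- arXiv:1905.11838 — 4 statements merged into one kernel-verified Lean document; each statement's English description precedes it below -/
import Mathlib

section
/- Let C be a set of m ≥ 2 candidates and let α be a normalized score vector of length m. Then for any two distinct candidates x, y ∈ C there exists a profile P consisting of exactly m votes such that s_P(x) + 1 = s_P(y) − 1 = s_P(a) for every candidate a ∈ C ∖ {x, y}. -/
open Finset

/-- A vote over a candidate set `C` with `m` candidates: a ranking assigning each
candidate its position. -/
abbrev Vote (C : Type*) (m : ℕ) := C ≃ Fin m

/-- The score of candidate `x` in profile `P` under score vector `α`. -/
def score {C : Type*} {m : ℕ} (α : Fin m → ℝ) (P : Multiset (Vote C m)) (x : C) : ℝ :=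
  (P.map fun v => α (v x)).sum

/-- The scoring rule of `α`: the set of candidates with maximum score. -/
def scoringRule {C : Type*} {m : ℕ} (α : Fin m → ℝ) (P : Multiset (Vote C m)) : Set C :=
  {x | ∀ y, score α P y ≤ score α P x}

/-- `margin P x y`: number of votes preferring `x` to `y` minus those preferring `y` to `x`. -/
def margin {C : Type*} {m : ℕ} (P : Multiset (Vote C m)) (x y : C) : ℤ :=
  ((P.filter fun v => v x < v y).card : ℤ) - ((P.filter fun v => v y < v x).card : ℤ)

/-- `c` is the Condorcet winner of `P`. -/
def CondorcetWinner {C : Type*} {m : ℕ} (P : Multiset (Vote C m)) (c : C) : Prop :=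
  ∀ y, y ≠ c → 0 < margin P c y

/-- The Condorcet voting rule: `{c}` if a Condorcet winner `c` exists, all candidates otherwise. -/
def condorcetRule {C : Type*} {m : ℕ} (P : Multiset (Vote C m)) : Set C :=
  {x | CondorcetWinner P x ∨ ¬ ∃ c, CondorcetWinner P c}

/-- `α` is monotone nonincreasing (part of being a score vector). -/
def IsMonotoneScore {m : ℕ} (α : Fin m → ℝ) : Prop :=
  ∀ i j : Fin m, i ≤ j → α j ≤ α i

/-- `α` is normalized: some consecutive difference is `1` and all later entries are `0`. -/
def IsNormalized {m : ℕ} (α : Fin m → ℝ) : Prop :=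
  ∃ j : ℕ, ∃ hj : j + 1 < m, α ⟨j, Nat.lt_of_succ_lt hj⟩ - α ⟨j + 1, hj⟩ = 1 ∧
    ∀ ℓ : Fin m, j < (ℓ : ℕ) → α ℓ = 0

/-- `Q` is a profile `P_u^v`: it has `m` votes and
`s_Q(u) + 1 = s_Q(v) - 1 = s_Q(z)` for every `z ∉ {u, v}`. -/
def PfGood {C : Type*} {m : ℕ} (α : Fin m → ℝ) (Q : Multiset (Vote C m)) (u v : C) : Prop :=
  Multiset.card Q = m ∧ score α Q u + 1 = score α Q v - 1 ∧
    ∀ z : C, z ≠ u → z ≠ v → score α Q z = score α Q v - 1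

/-- The Optimal Defense instance with groups `G`, attacker resource `ka` and defender
resource `kd` is a Yes instance for voting rule `r`. -/
def DefenseYes {C : Type*} {m N : ℕ} (r : Multiset (Vote C m) → Set C)
    (G : Fin N → Multiset (Vote C m)) (ka kd : ℕ) : Prop :=
  ∃ I : Finset (Fin N), I.card ≤ kd ∧
    ∀ I' : Finset (Fin N), Disjoint I I' → I'.card ≤ ka →
      r (∑ i ∈ Finset.univ \ I', G i) = r (∑ i, G i)

/-- The Optimal Attack instance with groups `G`, attacker resource `ka` and defender
resource `kd` is a Yes instance for voting rule `r`. -/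
def AttackYes {C : Type*} {m N : ℕ} (r : Multiset (Vote C m) → Set C)
    (G : Fin N → Multiset (Vote C m)) (ka kd : ℕ) : Prop :=
  ∃ I : Finset (Fin N), I.card ≤ ka ∧
    ∀ I' : Finset (Fin N), I'.card ≤ kd →
      r (∑ i ∈ Finset.univ \ (I \ I'), G i) ≠ r (∑ i, G i)

/-!
Start from the cyclic profile of a vote `w` (the `m` cyclic shifts of `w`), in which every
candidate meets every position exactly once and so scores `∑ i, α i`. Choose `w` with `x` and `y`
in the consecutive positions `j` and `j + 1` where `α` drops by `1`, and replace `w` by the same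
vote with `x` and `y` exchanged: `x` loses `1`, `y` gains `1`, and nobody else moves.
-/

theorem exists_equiv_apply_eq_apply_eq {α β : Type*} [Fintype α] [Fintype β] [DecidableEq β]
    (h : Fintype.card α = Fintype.card β) {x y : α} (hxy : x ≠ y) {i i' : β} (hii' : i ≠ i') :
    ∃ e : α ≃ β, e x = i ∧ e y = i' := by
  let e₀ := Fintype.equivOfCardEq h
  let e₁ := e₀.trans (Equiv.swap (e₀ x) i)
  have he₁x : e₁ x = i := by simp [e₁]
  have he₁y : e₁ y ≠ i := he₁x ▸ e₁.injective.ne hxy.symm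
  refine ⟨e₁.trans (Equiv.swap (e₁ y) i'), ?_, by simp⟩
  rw [Equiv.trans_apply, he₁x, Equiv.swap_apply_of_ne_of_ne he₁y.symm hii']

section Score

variable {C : Type*} {m : ℕ} (α : Fin m → ℝ)

theorem score_cons (v : Vote C m) (P : Multiset (Vote C m)) (a : C) :
    score α (v ::ₘ P) a = α (v a) + score α P a := by
  simp [score]

theorem score_cons_erase [DecidableEq (Vote C m)] {P : Multiset (Vote C m)} {w : Vote C m}
    (hw : w ∈ P) (v : Vote C m) (a : C) :
    score α (v ::ₘ P.erase w) a = score α P a - α (w a) + α (v a) := by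
  conv_rhs => rw [← Multiset.cons_erase hw, score_cons]
  rw [score_cons]
  ring

def cyclicProfile [NeZero m] (w : Vote C m) : Multiset (Vote C m) :=
  univ.val.map fun k => w.trans (Equiv.addRight k)

variable [NeZero m] (w : Vote C m)

theorem card_cyclicProfile : Multiset.card (cyclicProfile w) = m := by
  simp [cyclicProfile]

theorem mem_cyclicProfile_self : w ∈ cyclicProfile w :=
  Multiset.mem_map.mpr ⟨0, mem_val.mpr (mem_univ _), Equiv.ext fun _ => add_zero _⟩

theorem score_cyclicProfile (a : C) : score α (cyclicProfile w) a = ∑ i, α i := by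
  simp only [score, cyclicProfile, Multiset.map_map]
  exact Fintype.sum_equiv (Equiv.addLeft (w a)) _ _ fun _ => rfl

end Score

theorem stmt0_general {C : Type} [Fintype C] [DecidableEq C] {m : ℕ}
    (hcard : Fintype.card C = m) (α : Fin m → ℝ)
    (hnorm : IsNormalized α)
    (x y : C) (hxy : x ≠ y) :
    ∃ P : Multiset (Vote C m), Multiset.card P = m ∧
      score α P x + 1 = score α P y - 1 ∧
      ∀ a : C, a ≠ x → a ≠ y → score α P a = score α P y - 1 := by
  obtain ⟨j, hj, hdrop, -⟩ := hnorm
  have : NeZero m := ⟨by omega⟩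
  set J : Fin m := ⟨j, by omega⟩
  set J' : Fin m := ⟨j + 1, hj⟩
  obtain ⟨w, hwx, hwy⟩ := exists_equiv_apply_eq_apply_eq (by simpa using hcard) hxy
    (i := J) (i' := J') (Fin.ne_of_val_ne (by simp [J, J']))
  have hscore (a : C) :
      score α ((Equiv.swap x y).trans w ::ₘ (cyclicProfile w).erase w) a
        = ∑ i, α i - α (w a) + α (w (Equiv.swap x y a)) := by
    rw [score_cons_erase α (mem_cyclicProfile_self w), score_cyclicProfile, Equiv.trans_apply]
  refine ⟨(Equiv.swap x y).trans w ::ₘ (cyclicProfile w).erase w, ?_, ?_, fun a hax hay => ?_⟩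
  · rw [Multiset.card_cons, Multiset.card_erase_of_mem (mem_cyclicProfile_self w),
      card_cyclicProfile, Nat.pred_eq_sub_one]
    omega
  · rw [hscore, hscore, Equiv.swap_apply_left, Equiv.swap_apply_right, hwx, hwy]
    linarith
  · rw [hscore, hscore, Equiv.swap_apply_of_ne_of_ne hax hay, Equiv.swap_apply_right, hwx, hwy]
    linarith

/-- existence of the gadget profile `P_x^y` for any normalized score
vector of length `m ≥ 2`. -/
theorem stmt0 {C : Type} [Fintype C] [DecidableEq C] {m : ℕ} (hm : 2 ≤ m)
    (hcard : Fintype.card C = m) (α : Fin m → ℝ)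
    (hmono : IsMonotoneScore α) (hnorm : IsNormalized α)
    (x y : C) (hxy : x ≠ y) :
    ∃ P : Multiset (Vote C m), Multiset.card P = m ∧
      score α P x + 1 = score α P y - 1 ∧
      ∀ a : C, a ≠ x → a ≠ y → score α P a = score α P y - 1 :=
  stmt0_general hcard α hnorm x y hxy
end

section
/- Let C be a finite set of candidates and let f : C × C → ℤ be a function such that f(a,b) = −f(b,a) for all distinct a, b ∈ C and such that f(a,b) + f(c,d) is even for all distinct pairs a ≠ b and c ≠ d (equivalently, all the values f(a,b) for a ≠ b have the same parity). Then there exists a profile P over C such that for all distinct a, b ∈ C the candidate a defeats b in P with margin exactly f(a,b), i.e., D_P(a,b) = f(a,b) for all a ≠ b. -/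
/-!
The margin is additive in the profile. If `a` immediately precedes `b` in a vote `v`, then `v`
together with the reversal of `v` in which `a` and `b` are swapped back agrees on the pair
`(a, b)` and disagrees on every other pair, so this two-vote profile has margin `2` on `(a, b)`,
`-2` on `(b, a)` and `0` elsewhere. If all values of `f` are odd, one arbitrary vote (margin `±1`
everywhere) leaves an even remainder `g`; adding `g a b / 2` copies of the two-vote profile for
each pair with `g a b > 0` realizes it.
-/

open Finset

section

variable {C : Type*} {m : ℕ}

lemma margin_zero (x y : C) : margin (0 : Multiset (Vote C m)) x y = 0 := by
  simp [margin]

lemma margin_add (P Q : Multiset (Vote C m)) (x y : C) :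
    margin (P + Q) x y = margin P x y + margin Q x y := by
  simp only [margin, Multiset.filter_add, Multiset.card_add]
  push_cast
  ring

def marginHom (x y : C) : Multiset (Vote C m) →+ ℤ where
  toFun P := margin P x y
  map_zero' := margin_zero x y
  map_add' P Q := margin_add P Q x y

lemma margin_skew (P : Multiset (Vote C m)) (x y : C) : margin P y x = -margin P x y := by
  simp [margin]

lemma margin_sum {ι : Type*} (s : Finset ι) (P : ι → Multiset (Vote C m)) (x y : C) :
    margin (∑ i ∈ s, P i) x y = ∑ i ∈ s, margin (P i) x y :=
  map_sum (marginHom x y) P s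

lemma margin_nsmul (n : ℕ) (P : Multiset (Vote C m)) (x y : C) :
    margin (n • P) x y = n • margin P x y :=
  map_nsmul (marginHom x y) n P

lemma margin_singleton (v : Vote C m) {x y : C} (hxy : x ≠ y) :
    margin {v} x y = if v x < v y then 1 else -1 := by
  rcases lt_or_gt_of_ne (v.injective.ne hxy) with h | h <;>
    simp [margin, Multiset.filter_singleton, h, h.not_gt]

lemma odd_margin_singleton (v : Vote C m) {x y : C} (hxy : x ≠ y) : Odd (margin {v} x y) := by
  rw [margin_singleton v hxy]
  split_ifs <;> decide

lemma Fin.swap_lt_swap_iff_of_succ {i j k l : Fin m} (hkl : (l : ℕ) = k + 1)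
    (h : ¬(i = k ∧ j = l)) (h' : ¬(i = l ∧ j = k)) :
    Equiv.swap k l i < Equiv.swap k l j ↔ i < j := by
  simp only [Equiv.swap_apply_def]
  split_ifs <;> simp only [Fin.lt_def, Fin.ext_iff] at * <;> omega

lemma exists_equiv_apply_eq {β : Type*} [DecidableEq β] (e : C ≃ β) {a b : C} (hab : a ≠ b)
    {i j : β} (hij : i ≠ j) : ∃ v : C ≃ β, v a = i ∧ v b = j := by
  set u := e.trans (Equiv.swap (e a) i)
  have hua : u a = i := by simp [u]
  have hub : u b ≠ i := hua ▸ u.injective.ne hab.symm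
  refine ⟨u.trans (Equiv.swap (u b) j), ?_, by simp⟩
  simp only [Equiv.trans_apply, hua]
  exact Equiv.swap_apply_of_ne_of_ne hub.symm hij

lemma exists_vote_succ (e : Vote C m) {a b : C} (hab : a ≠ b) :
    ∃ v : Vote C m, (v b : ℕ) = v a + 1 := by
  have hm : 1 < m := by
    have := (e a).isLt; have := (e b).isLt
    have := Fin.val_injective.ne (e.injective.ne hab)
    omega
  obtain ⟨v, hva, hvb⟩ := exists_equiv_apply_eq e hab (i := ⟨0, by omega⟩) (j := ⟨1, hm⟩)
    (by simp [Fin.ext_iff])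
  exact ⟨v, by simp [hva, hvb]⟩

section PairProfile

variable [DecidableEq C]

def pairProfile (v : Vote C m) (a b : C) : Multiset (Vote C m) :=
  {v, (Equiv.swap a b).trans (v.trans Fin.revPerm)}

lemma margin_pairProfile (v : Vote C m) {a b x y : C} (hv : (v b : ℕ) = v a + 1)
    (hxy : x ≠ y) :
    margin (pairProfile v a b) x y =
      2 * ((if (x, y) = (a, b) then 1 else 0) - if (y, x) = (a, b) then 1 else 0) := by
  have hab : a ≠ b := by rintro rfl; omega
  have hvab : v a < v b := by rw [Fin.lt_def]; omega
  rw [pairProfile, Multiset.insert_eq_cons, ← Multiset.singleton_add, margin_add,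
    margin_singleton _ hxy, margin_singleton _ hxy]
  simp only [Equiv.trans_apply, Fin.revPerm_apply, Fin.rev_lt_rev, Prod.mk.injEq]
  by_cases hxy_ab : x = a ∧ y = b
  · obtain ⟨rfl, rfl⟩ := hxy_ab
    simp [hvab, hab]
  by_cases hyx_ab : y = a ∧ x = b
  · obtain ⟨rfl, rfl⟩ := hyx_ab
    simp [hvab.not_gt, hab.symm]
  have hswap : v (Equiv.swap a b y) < v (Equiv.swap a b x) ↔ v y < v x := by
    simp only [v.injective.map_swap]
    exact Fin.swap_lt_swap_iff_of_succ hv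
      (fun ⟨hya, hxb⟩ => hyx_ab ⟨v.injective hya, v.injective hxb⟩)
      (fun ⟨hyb, hxa⟩ => hxy_ab ⟨v.injective hxa, v.injective hyb⟩)
  rcases lt_or_gt_of_ne (v.injective.ne hxy) with h | h <;>
    simp [hswap, h, h.not_gt, hxy_ab, hyx_ab]

end PairProfile

end

lemma exists_margin_eq_of_even {C : Type*} [Fintype C] [DecidableEq C] {m : ℕ} (e : Vote C m)
    (g : C → C → ℤ) (hskew : ∀ a b, a ≠ b → g a b = -g b a)
    (heven : ∀ a b, a ≠ b → Even (g a b)) :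
    ∃ P : Multiset (Vote C m), ∀ x y, x ≠ y → margin P x y = g x y := by
  have : Nonempty (Vote C m) := ⟨e⟩
  choose! v hv using fun (a b : C) (hab : a ≠ b) => exists_vote_succ e hab
  refine ⟨∑ p ∈ univ.offDiag, (g p.1 p.2 / 2).toNat • pairProfile (v p.1 p.2) p.1 p.2,
    fun x y hxy => ?_⟩
  rw [margin_sum, Finset.sum_congr rfl fun p hp => by
    rw [margin_nsmul, margin_pairProfile (v p.1 p.2) (hv p.1 p.2 (mem_offDiag.1 hp).2.2) hxy]]
  trans 2 * ((g x y / 2).toNat : ℤ) - 2 * ((g y x / 2).toNat : ℤ)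
  · simp [mul_sub, sum_sub_distrib, hxy, hxy.symm, mul_comm]
  · obtain ⟨k, hk⟩ := heven x y hxy
    rw [hskew y x hxy.symm]
    omega

lemma exists_even_sub_margin {C : Type*} {m : ℕ} (e : Vote C m) (f : C → C → ℤ)
    (hpar : ∀ a b c d : C, a ≠ b → c ≠ d → Even (f a b + f c d)) :
    ∃ P : Multiset (Vote C m), ∀ a b, a ≠ b → Even (f a b - margin P a b) := by
  by_cases hall : ∀ a b : C, a ≠ b → Even (f a b)
  · exact ⟨0, by simpa [margin_zero] using hall⟩
  push Not at hall
  obtain ⟨c, d, hcd, hodd⟩ := hall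
  refine ⟨{e}, fun a b hab => ?_⟩
  have hfab : Odd (f a b) :=
    Int.not_even_iff_odd.1 fun h => hodd ((Int.even_add.1 (hpar a b c d hab hcd)).1 h)
  exact hfab.sub_odd (odd_margin_singleton e hab)

/-- McGarvey: any skew-symmetric integer function with uniform parity
is realized as the margin function of some profile. -/
theorem stmt1 {C : Type} [Fintype C] [DecidableEq C] (f : C → C → ℤ)
    (hanti : ∀ a b : C, a ≠ b → f a b = - f b a)
    (hpar : ∀ a b c d : C, a ≠ b → c ≠ d → Even (f a b + f c d)) :
    ∃ P : Multiset (Vote C (Fintype.card C)),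
      ∀ a b : C, a ≠ b → margin P a b = f a b := by
  let e := Fintype.equivFin C
  obtain ⟨P₀, hP₀⟩ := exists_even_sub_margin e f hpar
  obtain ⟨Q, hQ⟩ := exists_margin_eq_of_even e (fun a b => f a b - margin P₀ a b)
    (fun a b hab => by rw [hanti a b hab, margin_skew]; ring) hP₀
  exact ⟨P₀ + Q, fun a b hab => by rw [margin_add, hQ a b hab]; ring⟩
end

section
/- Fix the candidate set C = {a,b,c} and a normalized score vector α of length 3, and for each ordered pair (u,v) of distinct candidates fix a profile P_u^v as in the context. Let w_1,…,w_n be positive integers each divisible by 8, let M be a positive integer divisible by 8, let k be a positive integer with k ≤ n, 2k < n and M < ∑_{i=1}^n w_i, and let M' be an integer divisible by 8 with M' > ∑_{i=1}^n w_i. Define voter groups: for each i ∈ [n], G_i consists of w_i copies of P_a^c and M' − w_i copies of P_b^c; and Ĝ consists of (kM'+M)/2 − 3 copies of P_c^a, (kM'−M)/2 − 1 copies of P_c^b, and (kM'−M)/2 − 1 copies of P_a^b. Then the Optimal Defense instance (C, {G_1,…,G_n, Ĝ}, k_a = n+1, k_d = k) for the scoring rule of α is a Yes instance if and only if there exists an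 index set I ⊆ [n] with |I| = k and ∑_{i∈I} w_i = M. -/
open Finset

/-!
Each of the first `n` groups gives `c` a lead of `M' + wᵢ` over `a` and `2M' - wᵢ` over `b`,
while the last group `Ĝ` costs `c` exactly `kM' + M - 6` against `a` and `2kM' - M - 6` against
`b`; in the full election `c` wins. The attacker can delete every undefended group, and since
the leads of the first `n` groups are nonnegative, a defended set `I` protects `c` iff `c` wins
on `I` and on `I ∪ {Ĝ}`. Defending `Ĝ` is useless (with fewer than `k` other groups `c` falls
behind `b`), so `I` consists of at most `k` of the first groups, and `c` winning on `I ∪ {Ĝ}`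
forces `|I| = k` and `|∑_{i ∈ I} wᵢ - M| < 6`, i.e. `∑_{i ∈ I} wᵢ = M` as everything is
divisible by `8`.
-/

section Scores

variable {C : Type*} {m : ℕ} (α : Fin m → ℝ)

theorem score_add (P Q : Multiset (Vote C m)) (x : C) :
    score α (P + Q) x = score α P x + score α Q x := by
  simp [score]

theorem score_nsmul (t : ℕ) (P : Multiset (Vote C m)) (x : C) :
    score α (t • P) x = t * score α P x := by
  simp [score, Multiset.map_nsmul, Multiset.sum_nsmul]

theorem score_sum {ι : Type*} (S : Finset ι) (G : ι → Multiset (Vote C m)) (x : C) :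
    score α (∑ i ∈ S, G i) x = ∑ i ∈ S, score α (G i) x := by
  classical
  induction S using Finset.induction_on with
  | empty => simp [score]
  | insert i S hi ih => rw [Finset.sum_insert hi, score_add, ih, Finset.sum_insert hi]

theorem sum_score_eq_card_mul [Fintype C] (P : Multiset (Vote C m)) :
    ∑ x, score α P x = Multiset.card P * ∑ i, α i := by
  induction P using Multiset.induction_on with
  | empty => simp [score]
  | cons v P ih =>
    simp only [score, Multiset.map_cons, Multiset.sum_cons, Finset.sum_add_distrib] at ih ⊢
    rw [ih, Equiv.sum_comp v α, Multiset.card_cons]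
    push_cast
    ring

theorem PfGood.score_eq [Fintype C] [DecidableEq C] (hC : Fintype.card C = m)
    {Q : Multiset (Vote C m)} {u v : C} (huv : u ≠ v) (hQ : PfGood α Q u v) (x : C) :
    score α Q x = ∑ i, α i + if x = v then 1 else if x = u then -1 else 0 := by
  obtain ⟨hcard, hu, hz⟩ := hQ
  -- summing over all candidates: `s v + s u + (m - 2) (s v - 1) = m ∑ α`
  have htotal := sum_score_eq_card_mul α Q
  rw [← Finset.add_sum_erase _ _ (Finset.mem_univ v),
    ← Finset.add_sum_erase _ _ (Finset.mem_erase.2 ⟨huv, Finset.mem_univ u⟩),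
    Finset.sum_congr rfl (fun z hz' => hz z (Finset.ne_of_mem_erase hz')
      (Finset.ne_of_mem_erase (Finset.mem_of_mem_erase hz'))),
    Finset.sum_const, Finset.card_erase_of_mem (Finset.mem_erase.2 ⟨huv, Finset.mem_univ u⟩),
    Finset.card_erase_of_mem (Finset.mem_univ v), Finset.card_univ, hC, hcard] at htotal
  have hm : 2 ≤ m := hC ▸ Fintype.one_lt_card_iff_nontrivial.2 ⟨u, v, huv⟩
  rw [nsmul_eq_mul, Nat.sub_sub, Nat.cast_sub hm] at htotal
  push_cast at htotal
  have hv : score α Q v = ∑ i, α i + 1 := by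
    have h : (m : ℝ) * (score α Q v - (∑ i, α i + 1)) = 0 := by linear_combination htotal - hu
    exact sub_eq_zero.1 ((mul_eq_zero.1 h).resolve_left (by positivity))
  split_ifs with hxv hxu
  · rw [hxv, hv]
  · rw [hxu]; linarith
  · rw [hz x hxu hxv, hv]; ring

theorem scoringRule_eq_singleton_iff (P : Multiset (Vote C m)) (c : C) :
    scoringRule α P = {c} ↔ ∀ y, y ≠ c → score α P y < score α P c := by
  constructor
  · intro h y hy
    have hc : c ∈ scoringRule α P := h ▸ rfl
    have hy' : y ∉ scoringRule α P := h ▸ hy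
    simp only [scoringRule, Set.mem_ofPred_eq, not_forall, not_le] at hc hy'
    obtain ⟨z, hz⟩ := hy'
    exact hz.trans_le (hc z)
  · intro h
    ext x
    simp only [scoringRule, Set.mem_ofPred_eq, Set.mem_singleton_iff]
    refine ⟨fun hx => ?_, ?_⟩
    · by_contra hxc
      exact (h x hxc).not_ge (hx c)
    · rintro rfl y
      rcases eq_or_ne y x with rfl | hy
      · exact le_rfl
      · exact (h y hy).le

end Scores

theorem defenseYes_iff_forall_superset {C : Type*} {m N : ℕ} (r : Multiset (Vote C m) → Set C)
    (G : Fin N → Multiset (Vote C m)) {ka : ℕ} (kd : ℕ) (hka : N ≤ ka) :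
    DefenseYes r G ka kd ↔
      ∃ I : Finset (Fin N), I.card ≤ kd ∧ ∀ S, I ⊆ S → r (∑ i ∈ S, G i) = r (∑ i, G i) := by
  refine exists_congr fun I => and_congr_right fun _ => ⟨fun h S hIS => ?_, fun h I' hI' _ => ?_⟩
  · have hcard : (univ \ S).card ≤ ka := (card_le_univ _).trans (by simpa using hka)
    simpa using h (univ \ S) (disjoint_sdiff.mono_left hIS) hcard
  · exact h _ fun i hi => mem_sdiff.2 ⟨mem_univ i, disjoint_left.1 hI' hi⟩

theorem forall_superset_sum_pos_iff {ι β : Type*} [DecidableEq ι] [AddCommMonoid β]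
    [PartialOrder β] [IsOrderedCancelAddMonoid β] (f : ι → β) {ℓ : ι}
    (hf : ∀ i, i ≠ ℓ → 0 ≤ f i) (I : Finset ι) :
    (∀ S, I ⊆ S → 0 < ∑ i ∈ S, f i) ↔ 0 < ∑ i ∈ I, f i ∧ 0 < ∑ i ∈ insert ℓ I, f i := by
  refine ⟨fun h => ⟨h I subset_rfl, h _ (subset_insert ℓ I)⟩, fun ⟨hI, hℓI⟩ S hIS => ?_⟩
  by_cases hℓ : ℓ ∈ S
  · refine hℓI.trans_le (sum_le_sum_of_subset_of_nonneg (insert_subset hℓ hIS) ?_)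
    exact fun i _ hi => hf i fun h => hi (h ▸ mem_insert_self ℓ I)
  · exact hI.trans_le <| sum_le_sum_of_subset_of_nonneg hIS fun i hi _ =>
      hf i (ne_of_mem_of_not_mem hi hℓ)

theorem Fin.last_notMem_map_castSuccEmb {n : ℕ} (J : Finset (Fin n)) :
    Fin.last n ∉ J.map Fin.castSuccEmb := by
  simp [Fin.castSucc_ne_last]

theorem Fin.exists_erase_last_eq_map_castSuccEmb {n : ℕ} (I : Finset (Fin (n + 1))) :
    ∃ J : Finset (Fin n), I.erase (Fin.last n) = J.map Fin.castSuccEmb := by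
  refine ⟨univ.filter fun j => j.castSucc ∈ I, ?_⟩
  ext i
  induction i using Fin.lastCases <;> simp [Fin.castSucc_ne_last]

theorem Fintype.eq_or_eq_or_eq_of_card_eq_three {C : Type*} [Fintype C]
    (hC : Fintype.card C = 3) {a b c : C} (hab : a ≠ b) (hac : a ≠ c) (hbc : b ≠ c) (y : C) :
    y = a ∨ y = b ∨ y = c := by
  classical
  have huniv : ({a, b, c} : Finset C) = univ :=
    eq_univ_of_card _ (by rw [card_eq_three.2 ⟨a, b, c, hab, hac, hbc, rfl⟩, hC])
  simpa using eq_univ_iff_forall.1 huniv y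

theorem le_of_sum_univ_lt {ι : Type*} [Fintype ι] {f : ι → ℕ} {B : ℕ} (h : ∑ i, f i < B)
    (j : ι) : f j ≤ B :=
  (single_le_sum (fun i _ => Nat.zero_le (f i)) (mem_univ j)).trans h.le

namespace KSum

variable {n : ℕ} (w : Fin n → ℕ) (k M M' : ℕ)

def groups {C : Type*} (Pf : C → C → Multiset (Vote C 3)) (a b c : C) :
    Fin (n + 1) → Multiset (Vote C 3) :=
  Fin.snoc (fun i : Fin n => w i • Pf a c + (M' - w i) • Pf b c)
    (((k * M' + M) / 2 - 3) • Pf c a + ((k * M' - M) / 2 - 1) • Pf c b +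
      ((k * M' - M) / 2 - 1) • Pf a b)

/- The leads of `c` over `a` and over `b` in each group (see `score_groups_sub`); in the last
group they are `-2 K₁` and `-(K₁ + 3 K₂)` for `K₁ = (kM' + M)/2 - 3`, `K₂ = (kM' - M)/2 - 1`. -/
def leadA : Fin (n + 1) → ℝ :=
  Fin.snoc (α := fun _ => ℝ) (fun j => (M' + w j : ℝ)) (6 - k * M' - M)

def leadB : Fin (n + 1) → ℝ :=
  Fin.snoc (α := fun _ => ℝ) (fun j => (2 * M' - w j : ℝ)) (6 + M - 2 * k * M')

theorem sum_leadA_map (J : Finset (Fin n)) :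
    ∑ i ∈ J.map Fin.castSuccEmb, leadA w k M M' i = J.card * M' + ∑ j ∈ J, (w j : ℝ) := by
  simp only [leadA, sum_map, Fin.coe_castSuccEmb, Fin.snoc_castSucc, sum_add_distrib, sum_const,
    nsmul_eq_mul]

theorem sum_leadA_insert_last_map (J : Finset (Fin n)) :
    ∑ i ∈ insert (Fin.last n) (J.map Fin.castSuccEmb), leadA w k M M' i =
      6 - k * M' - M + (J.card * M' + ∑ j ∈ J, (w j : ℝ)) := by
  rw [sum_insert (Fin.last_notMem_map_castSuccEmb J), sum_leadA_map, leadA, Fin.snoc_last]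

theorem sum_leadB_map (J : Finset (Fin n)) :
    ∑ i ∈ J.map Fin.castSuccEmb, leadB w k M M' i = 2 * J.card * M' - ∑ j ∈ J, (w j : ℝ) := by
  simp only [leadB, sum_map, Fin.coe_castSuccEmb, Fin.snoc_castSucc, sum_sub_distrib, sum_const,
    nsmul_eq_mul]
  ring

theorem sum_leadB_insert_last_map (J : Finset (Fin n)) :
    ∑ i ∈ insert (Fin.last n) (J.map Fin.castSuccEmb), leadB w k M M' i =
      6 + M - 2 * k * M' + (2 * J.card * M' - ∑ j ∈ J, (w j : ℝ)) := by
  rw [sum_insert (Fin.last_notMem_map_castSuccEmb J), sum_leadB_map, leadB, Fin.snoc_last]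

theorem sum_leadB_insert_last_map_nonpos (hMM' : M + 9 ≤ M') {J : Finset (Fin n)}
    (hJ : J.card < k) :
    ∑ i ∈ insert (Fin.last n) (J.map Fin.castSuccEmb), leadB w k M M' i ≤ 0 := by
  have hJk : ((J.card + 1 : ℕ) : ℝ) * M' ≤ k * M' := by gcongr; exact hJ
  have hMM'' : (M : ℝ) + 9 ≤ M' := by exact_mod_cast hMM'
  have hw : (0 : ℝ) ≤ ∑ j ∈ J, (w j : ℝ) := by positivity
  rw [sum_leadB_insert_last_map]
  push_cast at hJk
  linarith

theorem last_notMem_of_sum_leadB_pos (hMM' : M + 9 ≤ M') {I : Finset (Fin (n + 1))}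
    (hIk : I.card ≤ k) (hB : 0 < ∑ i ∈ insert (Fin.last n) I, leadB w k M M' i) :
    Fin.last n ∉ I := by
  intro hlast
  obtain ⟨J, hJ⟩ := Fin.exists_erase_last_eq_map_castSuccEmb I
  rw [← insert_erase hlast, hJ] at hIk hB
  rw [card_insert_of_notMem (Fin.last_notMem_map_castSuccEmb J), card_map] at hIk
  rw [insert_idem] at hB
  exact hB.not_ge (sum_leadB_insert_last_map_nonpos w k M M' hMM' (by omega))

theorem leadA_nonneg (i : Fin (n + 1)) (hi : i ≠ Fin.last n) : 0 ≤ leadA w k M M' i := by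
  induction i using Fin.lastCases with
  | last => exact absurd rfl hi
  | cast j => rw [leadA, Fin.snoc_castSucc]; positivity

theorem leadB_nonneg (hw : ∀ j, w j ≤ M') (i : Fin (n + 1)) (hi : i ≠ Fin.last n) :
    0 ≤ leadB w k M M' i := by
  induction i using Fin.lastCases with
  | last => exact absurd rfl hi
  | cast j =>
    have : (w j : ℝ) ≤ M' := by exact_mod_cast hw j
    rw [leadB, Fin.snoc_castSucc]
    linarith

theorem score_groups_sub {C : Type*} [Fintype C] (hC : Fintype.card C = 3) {α : Fin 3 → ℝ}
    {a b c : C} (hab : a ≠ b) (hac : a ≠ c) (hbc : b ≠ c) {Pf : C → C → Multiset (Vote C 3)}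
    (hPf : ∀ u v : C, u ≠ v → PfGood α (Pf u v) u v) (hw : ∀ j, w j ≤ M') (hM8 : 8 ∣ M)
    (hkM'8 : 8 ∣ k * M') (hMkM' : M < k * M') (i : Fin (n + 1)) :
    score α (groups w k M M' Pf a b c i) c - score α (groups w k M M' Pf a b c i) a =
        leadA w k M M' i ∧
      score α (groups w k M M' Pf a b c i) c - score α (groups w k M M' Pf a b c i) b =
        leadB w k M M' i := by
  classical
  have hscore (u v : C) (huv : u ≠ v) := (hPf u v huv).score_eq α hC huv
  induction i using Fin.lastCases with
  | last =>
    have hK1 : ((k * M' + M) / 2 - 3) * 2 + 6 = k * M' + M := by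
      generalize k * M' = K at *; omega
    have hK2 : ((k * M' - M) / 2 - 1) * 2 + 2 + M = k * M' := by
      generalize k * M' = K at *; omega
    have hK1' : (((k * M' + M) / 2 - 3 : ℕ) : ℝ) * 2 + 6 = k * M' + M := by exact_mod_cast hK1
    have hK2' : (((k * M' - M) / 2 - 1 : ℕ) : ℝ) * 2 + 2 + M = k * M' := by exact_mod_cast hK2
    simp only [groups, leadA, leadB, Fin.snoc_last, score_add, score_nsmul, hscore _ _ hac.symm,
      hscore _ _ hbc.symm, hscore _ _ hab, if_pos, if_neg hab, if_neg hac, if_neg hbc,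
      if_neg hab.symm, if_neg hac.symm, if_neg hbc.symm]
    constructor <;> linarith
  | cast j =>
    simp only [groups, leadA, leadB, Fin.snoc_castSucc, score_add, score_nsmul, hscore _ _ hac,
      hscore _ _ hbc, if_pos, if_neg hab, if_neg hac, if_neg hbc, if_neg hab.symm,
      Nat.cast_sub (hw j)]
    constructor <;> ring

theorem scoringRule_sum_groups_eq_singleton_iff {C : Type*} [Fintype C]
    (hC : Fintype.card C = 3) {α : Fin 3 → ℝ} {a b c : C} (hab : a ≠ b) (hac : a ≠ c)
    (hbc : b ≠ c) {Pf : C → C → Multiset (Vote C 3)}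
    (hPf : ∀ u v : C, u ≠ v → PfGood α (Pf u v) u v) (hw : ∀ j, w j ≤ M') (hM8 : 8 ∣ M)
    (hkM'8 : 8 ∣ k * M') (hMkM' : M < k * M') (S : Finset (Fin (n + 1))) :
    scoringRule α (∑ i ∈ S, groups w k M M' Pf a b c i) = {c} ↔
      0 < ∑ i ∈ S, leadA w k M M' i ∧ 0 < ∑ i ∈ S, leadB w k M M' i := by
  have hgroup := score_groups_sub w k M M' hC hab hac hbc hPf hw hM8 hkM'8 hMkM'
  have hA : ∑ i ∈ S, leadA w k M M' i = score α (∑ i ∈ S, groups w k M M' Pf a b c i) c -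
      score α (∑ i ∈ S, groups w k M M' Pf a b c i) a := by
    rw [score_sum, score_sum, ← sum_sub_distrib]
    exact sum_congr rfl fun i _ => (hgroup i).1.symm
  have hB : ∑ i ∈ S, leadB w k M M' i = score α (∑ i ∈ S, groups w k M M' Pf a b c i) c -
      score α (∑ i ∈ S, groups w k M M' Pf a b c i) b := by
    rw [score_sum, score_sum, ← sum_sub_distrib]
    exact sum_congr rfl fun i _ => (hgroup i).2.symm
  rw [scoringRule_eq_singleton_iff, hA, hB, sub_pos, sub_pos]
  refine ⟨fun h => ⟨h a hac, h b hbc⟩, fun ⟨ha, hb⟩ y hyc => ?_⟩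
  rcases Fintype.eq_or_eq_or_eq_of_card_eq_three hC hab hac hbc y with rfl | rfl | rfl
  exacts [ha, hb, absurd rfl hyc]

theorem sum_univ_leads_pos (hkn : k < n) (hMW : M < ∑ j, w j) (hWM' : ∑ j, w j < M') :
    0 < ∑ i, leadA w k M M' i ∧ 0 < ∑ i, leadB w k M M' i := by
  have hkn' : ((k + 1 : ℕ) : ℝ) * M' ≤ n * M' := by gcongr; exact hkn
  have hMW' : (M : ℝ) < ∑ j, (w j : ℝ) := by exact_mod_cast hMW
  have hWM'' : ∑ j, (w j : ℝ) < M' := by exact_mod_cast hWM'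
  push_cast at hkn'
  simp only [Fin.sum_univ_castSucc, leadA, leadB, Fin.snoc_castSucc, Fin.snoc_last,
    sum_add_distrib, sum_sub_distrib, sum_const, card_univ, Fintype.card_fin, nsmul_eq_mul]
  constructor <;> linarith

theorem exists_forall_superset_leads_pos_iff (hw8 : ∀ j, 8 ∣ w j) (hM8 : 8 ∣ M) (hk : 0 < k)
    (hMW : M < ∑ j, w j) (hWM' : ∑ j, w j < M') :
    (∃ I : Finset (Fin (n + 1)), I.card ≤ k ∧
        ∀ S, I ⊆ S → 0 < ∑ i ∈ S, leadA w k M M' i ∧ 0 < ∑ i ∈ S, leadB w k M M' i) ↔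
      ∃ J : Finset (Fin n), J.card = k ∧ ∑ j ∈ J, w j = M := by
  have hMM' : M + 9 ≤ M' := by
    have : 8 ∣ ∑ j, w j := dvd_sum fun j _ => hw8 j
    omega
  simp only [imp_and, forall_and,
    forall_superset_sum_pos_iff _ (leadA_nonneg w k M M'),
    forall_superset_sum_pos_iff _ (leadB_nonneg w k M M' (le_of_sum_univ_lt hWM'))]
  constructor
  · rintro ⟨I, hIk, ⟨-, hA⟩, -, hB⟩
    have hlast := last_notMem_of_sum_leadB_pos w k M M' hMM' hIk hB
    obtain ⟨J, hJ⟩ := Fin.exists_erase_last_eq_map_castSuccEmb I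
    rw [erase_eq_of_notMem hlast] at hJ
    subst hJ
    rw [card_map] at hIk
    have hJk : J.card = k := by
      by_contra hne
      linarith [sum_leadB_insert_last_map_nonpos w k M M' hMM' (J := J) (by omega)]
    rw [sum_leadA_insert_last_map, hJk] at hA
    rw [sum_leadB_insert_last_map, hJk] at hB
    have h1 : M < ∑ j ∈ J, w j + 6 := by
      exact_mod_cast (by linarith : (M : ℝ) < ∑ j ∈ J, (w j : ℝ) + 6)
    have h2 : ∑ j ∈ J, w j < M + 6 := by
      exact_mod_cast (by linarith : ∑ j ∈ J, (w j : ℝ) < M + 6)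
    have h8 : 8 ∣ ∑ j ∈ J, w j := dvd_sum fun j _ => hw8 j
    exact ⟨J, hJk, by omega⟩
  · rintro ⟨J, hJk, hJM⟩
    have hM' : (M : ℝ) + 9 ≤ M' := by exact_mod_cast hMM'
    have hkM' : (M' : ℝ) ≤ k * M' := le_mul_of_one_le_left (by positivity) (by exact_mod_cast hk)
    refine ⟨J.map Fin.castSuccEmb, by rw [card_map, hJk], ⟨?_, ?_⟩, ?_, ?_⟩ <;>
      simp only [sum_leadA_map, sum_leadA_insert_last_map, sum_leadB_map,
        sum_leadB_insert_last_map, hJk, ← Nat.cast_sum, hJM] <;>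
      linarith

end KSum

theorem stmt2_general {C : Type} [Fintype C] (hC : Fintype.card C = 3)
    (a b c : C) (hab : a ≠ b) (hac : a ≠ c) (hbc : b ≠ c)
    (α : Fin 3 → ℝ)
    (Pf : C → C → Multiset (Vote C 3))
    (hPf : ∀ u v : C, u ≠ v → PfGood α (Pf u v) u v)
    (n : ℕ) (w : Fin n → ℕ) (hw8 : ∀ i, 8 ∣ w i)
    (M k M' : ℕ) (hM8 : 8 ∣ M)
    (hkpos : 0 < k) (h2k : 2 * k < n)
    (hMsum : M < ∑ i, w i) (hM'8 : 8 ∣ M') (hM'big : (∑ i, w i) < M') :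
    DefenseYes (scoringRule α)
      (Fin.snoc (fun i : Fin n => w i • Pf a c + (M' - w i) • Pf b c)
        (((k * M' + M) / 2 - 3) • Pf c a + ((k * M' - M) / 2 - 1) • Pf c b +
          ((k * M' - M) / 2 - 1) • Pf a b))
      (n + 1) k ↔
    ∃ I : Finset (Fin n), I.card = k ∧ ∑ i ∈ I, w i = M := by
  have hMkM' : M < k * M' := hMsum.trans (hM'big.trans_le (Nat.le_mul_of_pos_left M' hkpos))
  have hwins := KSum.scoringRule_sum_groups_eq_singleton_iff w k M M' hC hab hac hbc hPf
    (le_of_sum_univ_lt hM'big) hM8 (dvd_mul_of_dvd_right hM'8 k) hMkM'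
  change DefenseYes (scoringRule α) (KSum.groups w k M M' Pf a b c) (n + 1) k ↔ _
  rw [defenseYes_iff_forall_superset _ _ _ le_rfl,
    (hwins univ).2 (KSum.sum_univ_leads_pos w k M M' (by omega) hMsum hM'big)]
  simp only [hwins]
  exact KSum.exists_forall_superset_leads_pos_iff w k M M' hw8 hM8 hkpos hMsum hM'big

/-- the k-Sum reduction instance for Optimal Defense under a scoring
rule with 3 candidates. -/
theorem stmt2 {C : Type} [Fintype C] [DecidableEq C] (hC : Fintype.card C = 3)
    (a b c : C) (hab : a ≠ b) (hac : a ≠ c) (hbc : b ≠ c)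
    (α : Fin 3 → ℝ) (hmono : IsMonotoneScore α) (hnorm : IsNormalized α)
    (Pf : C → C → Multiset (Vote C 3))
    (hPf : ∀ u v : C, u ≠ v → PfGood α (Pf u v) u v)
    (n : ℕ) (w : Fin n → ℕ) (hwpos : ∀ i, 0 < w i) (hw8 : ∀ i, 8 ∣ w i)
    (M k M' : ℕ) (hMpos : 0 < M) (hM8 : 8 ∣ M)
    (hkpos : 0 < k) (hkn : k ≤ n) (h2k : 2 * k < n)
    (hMsum : M < ∑ i, w i) (hM'8 : 8 ∣ M') (hM'big : (∑ i, w i) < M') :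
    DefenseYes (scoringRule α)
      (Fin.snoc (fun i : Fin n => w i • Pf a c + (M' - w i) • Pf b c)
        (((k * M' + M) / 2 - 3) • Pf c a + ((k * M' - M) / 2 - 1) • Pf c b +
          ((k * M' - M) / 2 - 1) • Pf a b))
      (n + 1) k ↔
    ∃ I : Finset (Fin n), I.card = k ∧ ∑ i ∈ I, w i = M :=
  stmt2_general hC a b c hab hac hbc α Pf hPf n w hw8 M k M' hM8 hkpos h2k hMsum hM'8 hM'big
end

section
/- Let U = {z_1,…,z_n} be a universe, let S_1,…,S_t be nonempty subsets of U, and let k be a positive integer with k ≤ n. Fix the candidate set C = {x_1,…,x_t, y, d}, a normalized score vector α of length t+2, and for each ordered pair (u,v) of distinct candidates fix a profile P_u^v as in the context. Define voter groups: for each i ∈ [n], G_i consists of 2 copies of P_{x_j}^d for every j ∈ [t] with z_i ∈ S_j; and Ĝ consists of 2tn copies of P_d^{x_j} for every j ∈ [t] together with 2tn − 1 copies of P_d^y. Then the Optimal Defense instance (C, {G_1,…,G_n, Ĝ}, k_a = n, k_d = k+1) for the scoring rule of α is a Yes instance if and only if there exists W ⊆ U with |W| = k and W ∩ S_j ≠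 ∅ for every j ∈ [t] (i.e., the Hitting Set instance (U, {S_1,…,S_t}, k) is a Yes instance). -/
open Finset

/-! Each `P_u^v` scores every candidate alike up to `-1` for `u` and `+1` for `v`, so the scores of
any union of groups are a constant plus an explicit excess, and the winners maximise the excess.
While `Ĝ` is present, `y` (excess `2tn - 1`) beats `d`, and beats `x_j` (excess
`2tn - 2·#{present element groups G_i with z_i ∈ S_j}`) iff `S_j` is hit by a present group.
Removing only `Ĝ` makes `d` the winner, so a defence protects `Ĝ` and at most `k` element groups;
these must hit every `S_j`, or removing all other groups lets `x_j` overtake `y`. Conversely, `Ĝ`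
together with a hitting set is a defence. -/

section ScoresUpToConst

variable {C : Type*} {m : ℕ} {α : Fin m → ℝ}

variable (α) in
def ScoresUpToConst (P : Multiset (Vote C m)) (f : C → ℝ) : Prop :=
  ∃ B, ∀ c, score α P c = B + f c

namespace ScoresUpToConst

theorem zero : ScoresUpToConst α (0 : Multiset (Vote C m)) 0 :=
  ⟨0, fun c => by simp [score]⟩

theorem add {P Q : Multiset (Vote C m)} {f g : C → ℝ} (hP : ScoresUpToConst α P f)
    (hQ : ScoresUpToConst α Q g) : ScoresUpToConst α (P + Q) (f + g) := by
  obtain ⟨B, hB⟩ := hP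
  obtain ⟨B', hB'⟩ := hQ
  refine ⟨B + B', fun c => ?_⟩
  simp only [score, Multiset.map_add, Multiset.sum_add] at hB hB' ⊢
  rw [hB, hB', Pi.add_apply]
  ring

theorem nsmul {P : Multiset (Vote C m)} {f : C → ℝ} (hP : ScoresUpToConst α P f) (N : ℕ) :
    ScoresUpToConst α (N • P) (N • f) := by
  obtain ⟨B, hB⟩ := hP
  refine ⟨N * B, fun c => ?_⟩
  simp only [score, Multiset.map_nsmul, Multiset.sum_nsmul] at hB ⊢
  rw [hB, Pi.smul_apply, nsmul_eq_mul, nsmul_eq_mul, mul_add]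

theorem sum {ι : Type*} {s : Finset ι} {P : ι → Multiset (Vote C m)} {f : ι → C → ℝ}
    (h : ∀ i ∈ s, ScoresUpToConst α (P i) (f i)) :
    ScoresUpToConst α (∑ i ∈ s, P i) (∑ i ∈ s, f i) := by
  classical
  induction s using Finset.induction_on with
  | empty => simpa using zero
  | insert a s ha ih =>
    rw [sum_insert ha, sum_insert ha]
    exact (h a (mem_insert_self a s)).add (ih fun i hi => h i (mem_insert_of_mem hi))

theorem mem_scoringRule_iff {P : Multiset (Vote C m)} {f : C → ℝ} (hP : ScoresUpToConst α P f)
    {c : C} : c ∈ scoringRule α P ↔ ∀ b, f b ≤ f c := by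
  obtain ⟨B, hB⟩ := hP
  simp only [scoringRule, Set.mem_ofPred_eq, hB, add_le_add_iff_left]

theorem scoringRule_eq_singleton {P : Multiset (Vote C m)} {f : C → ℝ}
    (hP : ScoresUpToConst α P f) {w : C} (hw : ∀ c ≠ w, f c < f w) :
    scoringRule α P = {w} := by
  ext c
  rw [hP.mem_scoringRule_iff, Set.mem_singleton_iff]
  constructor
  · intro hc
    by_contra hcw
    exact (hw c hcw).not_ge (hc w)
  · rintro rfl b
    rcases eq_or_ne b c with rfl | hb
    exacts [le_rfl, (hw b hb).le]

end ScoresUpToConst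

def pfExcess [DecidableEq C] (u v c : C) : ℝ :=
  (if c = v then 1 else 0) - (if c = u then 1 else 0)

theorem PfGood.scoresUpToConst [DecidableEq C] {Q : Multiset (Vote C m)} {u v : C}
    (hQ : PfGood α Q u v) (huv : u ≠ v) : ScoresUpToConst α Q (pfExcess u v) := by
  obtain ⟨-, hu, hz⟩ := hQ
  refine ⟨score α Q v - 1, fun c => ?_⟩
  by_cases hcv : c = v
  · subst hcv
    simp [pfExcess, huv.symm]
  by_cases hcu : c = u
  · subst hcu
    simp [pfExcess, huv]
    linarith
  · simp [pfExcess, hcu, hcv, hz c hcu hcv]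

end ScoresUpToConst

theorem DefenseYes.of_forall_eq_zero {C : Type*} {m N : ℕ} (r : Multiset (Vote C m) → Set C)
    {G : Fin N → Multiset (Vote C m)} (hG : ∀ i, G i = 0) (ka kd : ℕ) : DefenseYes r G ka kd :=
  ⟨∅, by simp, fun I' _ _ => by simp [hG]⟩

theorem Fin.sum_snoc_finset {M : Type*} [AddCommMonoid M] {n : ℕ} (f : Fin n → M) (a : M)
    (K : Finset (Fin (n + 1))) :
    ∑ i ∈ K, Fin.snoc (α := fun _ => M) f a i =
      ∑ i ∈ univ.filter (fun i => Fin.castSucc i ∈ K), f i + if Fin.last n ∈ K then a else 0 := by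
  rw [← univ_inter K, ← sum_ite_mem, Fin.sum_univ_castSucc, sum_filter]
  simp only [Fin.snoc_castSucc, Fin.snoc_last, univ_inter]

theorem Fin.map_castSuccEmb_filter_castSucc_mem {n : ℕ} (K : Finset (Fin (n + 1))) :
    (univ.filter fun i => Fin.castSucc i ∈ K).map Fin.castSuccEmb = K.erase (Fin.last n) := by
  ext i
  induction i using Fin.lastCases <;> simp [Fin.castSucc_ne_last]

theorem sum_card_filter_mem_le {n t : ℕ} (S : Fin t → Finset (Fin n)) (A : Finset (Fin n)) :
    ∑ i ∈ A, ((univ.filter fun j => i ∈ S j).card : ℝ) ≤ n * t :=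
  calc ∑ i ∈ A, ((univ.filter fun j => i ∈ S j).card : ℝ)
      ≤ ∑ _i ∈ A, (t : ℝ) := sum_le_sum fun i _ => by
        exact_mod_cast (card_filter_le _ _).trans_eq (card_fin t)
    _ = A.card * t := by rw [sum_const, nsmul_eq_mul]
    _ ≤ n * t := by
        gcongr
        exact_mod_cast (card_le_univ A).trans_eq (Fintype.card_fin n)

section Reduction

variable {C : Type} [DecidableEq C]

def elemExcess {n t : ℕ} (S : Fin t → Finset (Fin n)) (x : Fin t → C) (d : C) (i : Fin n) :
    C → ℝ :=
  ∑ j ∈ univ.filter (fun j => i ∈ S j), 2 • pfExcess (x j) d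

def hatExcess (n : ℕ) {t : ℕ} (x : Fin t → C) (y d : C) : C → ℝ :=
  ∑ j, (2 * t * n) • pfExcess d (x j) + (2 * t * n - 1) • pfExcess d y

variable {n t m : ℕ} {S : Fin t → Finset (Fin n)} {x : Fin t → C} {y d : C}
  {α : Fin m → ℝ} {Pf : C → C → Multiset (Vote C m)}

theorem sum_elemExcess_apply_y (hxy : ∀ j, x j ≠ y) (hyd : y ≠ d) (A : Finset (Fin n)) :
    (∑ i ∈ A, elemExcess S x d i) y = 0 := by
  simp [elemExcess, pfExcess, hyd, (hxy _).symm]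

theorem sum_elemExcess_apply_d (hxd : ∀ j, x j ≠ d) (A : Finset (Fin n)) :
    (∑ i ∈ A, elemExcess S x d i) d = 2 * ∑ i ∈ A, ((univ.filter fun j => i ∈ S j).card : ℝ) := by
  simp [elemExcess, pfExcess, (hxd _).symm, mul_sum, mul_comm]

theorem sum_elemExcess_apply_x (hxinj : Function.Injective x) (hxd : ∀ j, x j ≠ d)
    (A : Finset (Fin n)) (j : Fin t) :
    (∑ i ∈ A, elemExcess S x d i) (x j) = -2 * (A ∩ S j).card := by
  simp [elemExcess, pfExcess, hxd, hxinj.eq_iff, mul_comm]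

theorem sum_elemExcess_apply_of_ne {c : C} (hcd : c ≠ d) (hcx : ∀ j, c ≠ x j)
    (A : Finset (Fin n)) : (∑ i ∈ A, elemExcess S x d i) c = 0 := by
  simp [elemExcess, pfExcess, hcd, hcx]

theorem hatExcess_apply_y (hxy : ∀ j, x j ≠ y) (hyd : y ≠ d) (htn : 0 < t * n) :
    hatExcess n x y d y = 2 * t * n - 1 := by
  have : 1 ≤ 2 * t * n := by lia
  simp [hatExcess, pfExcess, hyd, (hxy _).symm, Nat.cast_sub this]

theorem hatExcess_apply_d (hxd : ∀ j, x j ≠ d) (hyd : y ≠ d) (htn : 0 < t * n) :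
    hatExcess n x y d d = -(t * (2 * t * n)) - (2 * t * n - 1) := by
  have : 1 ≤ 2 * t * n := by lia
  simp [hatExcess, pfExcess, hyd.symm, (hxd _).symm, Nat.cast_sub this, sub_eq_add_neg]

theorem hatExcess_apply_x (hxinj : Function.Injective x) (hxy : ∀ j, x j ≠ y)
    (hxd : ∀ j, x j ≠ d) (j : Fin t) : hatExcess n x y d (x j) = 2 * t * n := by
  simp [hatExcess, pfExcess, hxd, hxy, hxinj.eq_iff]

theorem hatExcess_apply_of_ne {c : C} (hcy : c ≠ y) (hcd : c ≠ d) (hcx : ∀ j, c ≠ x j) :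
    hatExcess n x y d c = 0 := by
  simp [hatExcess, pfExcess, hcy, hcd, hcx]

theorem excess_lt_excess_y (hxinj : Function.Injective x) (hxy : ∀ j, x j ≠ y)
    (hxd : ∀ j, x j ≠ d) (hyd : y ≠ d) (htn : 0 < t * n) {A : Finset (Fin n)}
    (hA : ∀ j, (A ∩ S j).Nonempty) {c : C} (hcy : c ≠ y) :
    (∑ i ∈ A, elemExcess S x d i + hatExcess n x y d) c <
      (∑ i ∈ A, elemExcess S x d i + hatExcess n x y d) y := by
  have htn' : (1 : ℝ) ≤ t * n := by exact_mod_cast htn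
  simp only [Pi.add_apply, sum_elemExcess_apply_y hxy hyd, hatExcess_apply_y hxy hyd htn]
  by_cases hcd : c = d
  · subst hcd
    rw [sum_elemExcess_apply_d hxd, hatExcess_apply_d hxd hyd htn]
    have := sum_card_filter_mem_le S A
    nlinarith
  by_cases hcx : ∃ j, c = x j
  · obtain ⟨j, rfl⟩ := hcx
    rw [sum_elemExcess_apply_x hxinj hxd, hatExcess_apply_x hxinj hxy hxd]
    have : (1 : ℝ) ≤ (A ∩ S j).card := by exact_mod_cast (hA j).card_pos
    linarith
  · push Not at hcx
    rw [sum_elemExcess_apply_of_ne hcd hcx, hatExcess_apply_of_ne hcy hcd hcx]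
    linarith

theorem excess_y_lt_excess_x (hxinj : Function.Injective x) (hxy : ∀ j, x j ≠ y)
    (hxd : ∀ j, x j ≠ d) (hyd : y ≠ d) (htn : 0 < t * n) {A : Finset (Fin n)} {j : Fin t}
    (hAj : A ∩ S j = ∅) :
    (∑ i ∈ A, elemExcess S x d i + hatExcess n x y d) y <
      (∑ i ∈ A, elemExcess S x d i + hatExcess n x y d) (x j) := by
  simp only [Pi.add_apply, sum_elemExcess_apply_y hxy hyd, hatExcess_apply_y hxy hyd htn,
    sum_elemExcess_apply_x hxinj hxd, hatExcess_apply_x hxinj hxy hxd, hAj]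
  norm_num

theorem sum_elemExcess_lt_d (hS : ∀ j, (S j).Nonempty) (hxinj : Function.Injective x)
    (hxy : ∀ j, x j ≠ y) (hxd : ∀ j, x j ≠ d) (hyd : y ≠ d) (ht : 0 < t) {c : C}
    (hcd : c ≠ d) : (∑ i, elemExcess S x d i) c < (∑ i, elemExcess S x d i) d := by
  have hd : 2 ≤ (∑ i, elemExcess S x d i) d := by
    obtain ⟨i, hi⟩ := hS ⟨0, ht⟩
    have hdeg : (1 : ℝ) ≤ (univ.filter fun j => i ∈ S j).card := by
      have : (univ.filter fun j => i ∈ S j).Nonempty :=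
        ⟨⟨0, ht⟩, mem_filter.mpr ⟨mem_univ _, hi⟩⟩
      exact_mod_cast this.card_pos
    rw [sum_elemExcess_apply_d hxd]
    linarith [single_le_sum (f := fun i => ((univ.filter fun j => i ∈ S j).card : ℝ))
      (fun _ _ => Nat.cast_nonneg _) (mem_univ i)]
  rcases eq_or_ne c y with rfl | hcy
  · rw [sum_elemExcess_apply_y hxy hyd]
    linarith
  by_cases hcx : ∃ j, c = x j
  · obtain ⟨j, rfl⟩ := hcx
    rw [sum_elemExcess_apply_x hxinj hxd]
    linarith [(Nat.cast_nonneg (α := ℝ) (univ ∩ S j).card)]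
  · push Not at hcx
    rw [sum_elemExcess_apply_of_ne hcd hcx]
    linarith

variable (S x y d Pf) in
def reductionGroups : Fin (n + 1) → Multiset (Vote C m) :=
  Fin.snoc (fun i : Fin n => ∑ j ∈ univ.filter (fun j => i ∈ S j), 2 • Pf (x j) d)
    ((∑ j, (2 * t * n) • Pf d (x j)) + (2 * t * n - 1) • Pf d y)

theorem sum_reductionGroups_scoresUpToConst (hPf : ∀ u v, u ≠ v → PfGood α (Pf u v) u v)
    (hxd : ∀ j, x j ≠ d) (hyd : y ≠ d) (K : Finset (Fin (n + 1))) :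
    ScoresUpToConst α (∑ i ∈ K, reductionGroups S x y d Pf i)
      (∑ i ∈ univ.filter (fun i => Fin.castSucc i ∈ K), elemExcess S x d i +
        if Fin.last n ∈ K then hatExcess n x y d else 0) := by
  have hP : ∀ u v, u ≠ v → ScoresUpToConst α (Pf u v) (pfExcess u v) :=
    fun u v huv => (hPf u v huv).scoresUpToConst huv
  rw [← Fin.sum_snoc_finset]
  refine ScoresUpToConst.sum fun i _ => Fin.lastCases ?_ (fun i => ?_) i
  · simp only [reductionGroups, Fin.snoc_last, hatExcess]
    exact (ScoresUpToConst.sum fun j _ => (hP _ _ (hxd j).symm).nsmul _).add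
      ((hP _ _ hyd.symm).nsmul _)
  · simp only [reductionGroups, Fin.snoc_castSucc, elemExcess]
    exact ScoresUpToConst.sum fun j _ => (hP _ _ (hxd j)).nsmul _

theorem scoringRule_sum_reductionGroups_eq_y (hPf : ∀ u v, u ≠ v → PfGood α (Pf u v) u v)
    (hxinj : Function.Injective x) (hxy : ∀ j, x j ≠ y) (hxd : ∀ j, x j ≠ d) (hyd : y ≠ d)
    (htn : 0 < t * n) {K : Finset (Fin (n + 1))} (hK : Fin.last n ∈ K)
    (hhit : ∀ j, ((univ.filter fun i => Fin.castSucc i ∈ K) ∩ S j).Nonempty) :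
    scoringRule α (∑ i ∈ K, reductionGroups S x y d Pf i) = {y} := by
  have h := sum_reductionGroups_scoresUpToConst (S := S) hPf hxd hyd K
  rw [if_pos hK] at h
  exact h.scoringRule_eq_singleton fun c hc => excess_lt_excess_y hxinj hxy hxd hyd htn hhit hc

theorem y_notMem_scoringRule_sum_reductionGroups
    (hPf : ∀ u v, u ≠ v → PfGood α (Pf u v) u v) (hxinj : Function.Injective x)
    (hxy : ∀ j, x j ≠ y) (hxd : ∀ j, x j ≠ d) (hyd : y ≠ d) (htn : 0 < t * n)
    {K : Finset (Fin (n + 1))} (hK : Fin.last n ∈ K) {j : Fin t}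
    (hmiss : (univ.filter fun i => Fin.castSucc i ∈ K) ∩ S j = ∅) :
    y ∉ scoringRule α (∑ i ∈ K, reductionGroups S x y d Pf i) := by
  have h := sum_reductionGroups_scoresUpToConst (S := S) hPf hxd hyd K
  rw [if_pos hK] at h
  rw [h.mem_scoringRule_iff]
  exact fun hy => (excess_y_lt_excess_x hxinj hxy hxd hyd htn hmiss).not_ge (hy _)

theorem scoringRule_sum_reductionGroups_erase_last (hS : ∀ j, (S j).Nonempty)
    (hPf : ∀ u v, u ≠ v → PfGood α (Pf u v) u v) (hxinj : Function.Injective x)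
    (hxy : ∀ j, x j ≠ y) (hxd : ∀ j, x j ≠ d) (hyd : y ≠ d) (ht : 0 < t) :
    scoringRule α (∑ i ∈ univ.erase (Fin.last n), reductionGroups S x y d Pf i) = {d} := by
  have h := sum_reductionGroups_scoresUpToConst (S := S) hPf hxd hyd (univ.erase (Fin.last n))
  simp only [mem_erase, ne_eq, not_true_eq_false, if_false, add_zero, Fin.castSucc_ne_last,
    not_false_eq_true, mem_univ, and_true, filter_true] at h
  exact h.scoringRule_eq_singleton fun c hc => sum_elemExcess_lt_d hS hxinj hxy hxd hyd ht hc

theorem exists_hittingSet_of_defenseYes (hS : ∀ j, (S j).Nonempty)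
    (hPf : ∀ u v, u ≠ v → PfGood α (Pf u v) u v) (hxinj : Function.Injective x)
    (hxy : ∀ j, x j ≠ y) (hxd : ∀ j, x j ≠ d) (hyd : y ≠ d) (ht : 0 < t) (hn : 0 < n)
    {k : ℕ} (hkn : k ≤ n)
    (hdef : DefenseYes (scoringRule α) (reductionGroups S x y d Pf) n (k + 1)) :
    ∃ W : Finset (Fin n), W.card = k ∧ ∀ j, (W ∩ S j).Nonempty := by
  obtain ⟨I, hIcard, hI⟩ := hdef
  have hfull : scoringRule α (∑ i, reductionGroups S x y d Pf i) = {y} :=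
    scoringRule_sum_reductionGroups_eq_y hPf hxinj hxy hxd hyd (Nat.mul_pos ht hn) (mem_univ _)
      (by simpa using hS)
  have hlast : Fin.last n ∈ I := by
    by_contra hlast
    have h := hI {Fin.last n} (disjoint_singleton_right.mpr hlast)
      ((card_singleton _).trans_le hn)
    rw [hfull, sdiff_singleton_eq_erase,
      scoringRule_sum_reductionGroups_erase_last hS hPf hxinj hxy hxd hyd ht] at h
    exact hyd (Set.singleton_eq_singleton_iff.mp h).symm
  have hIy : y ∈ scoringRule α (∑ i ∈ I, reductionGroups S x y d Pf i) := by
    have hcard : (univ \ I).card ≤ n := by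
      rw [card_univ_sdiff, Fintype.card_fin]
      have := card_pos.mpr ⟨_, hlast⟩
      lia
    have h := hI (univ \ I) disjoint_sdiff hcard
    rw [sdiff_sdiff_right_self, inf_eq_inter, univ_inter, hfull] at h
    exact h ▸ Set.mem_singleton y
  set A := univ.filter fun i => Fin.castSucc i ∈ I
  have hhit : ∀ j, (A ∩ S j).Nonempty := fun j => by
    by_contra hmiss
    exact y_notMem_scoringRule_sum_reductionGroups hPf hxinj hxy hxd hyd (Nat.mul_pos ht hn)
      hlast (not_nonempty_iff_eq_empty.mp hmiss) hIy
  have hA : A.card ≤ k := by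
    have := congr_arg card (Fin.map_castSuccEmb_filter_castSucc_mem I)
    rw [card_map, card_erase_of_mem hlast] at this
    lia
  obtain ⟨W, hAW, -, hW⟩ := exists_subsuperset_card_eq (subset_univ A) hA (by simpa using hkn)
  exact ⟨W, hW, fun j => (hhit j).mono (inter_subset_inter_right hAW)⟩

theorem defenseYes_of_exists_hittingSet (hS : ∀ j, (S j).Nonempty)
    (hPf : ∀ u v, u ≠ v → PfGood α (Pf u v) u v) (hxinj : Function.Injective x)
    (hxy : ∀ j, x j ≠ y) (hxd : ∀ j, x j ≠ d) (hyd : y ≠ d) (htn : 0 < t * n) {k : ℕ}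
    (hW : ∃ W : Finset (Fin n), W.card = k ∧ ∀ j, (W ∩ S j).Nonempty) :
    DefenseYes (scoringRule α) (reductionGroups S x y d Pf) n (k + 1) := by
  obtain ⟨W, hWcard, hWhit⟩ := hW
  refine ⟨insert (Fin.last n) (W.map Fin.castSuccEmb),
    (card_insert_le _ _).trans (by simp [hWcard]), fun I' hI' _ => ?_⟩
  have hkept : ∀ i ∈ insert (Fin.last n) (W.map Fin.castSuccEmb), i ∉ I' :=
    fun i hi => disjoint_left.mp hI' hi
  rw [scoringRule_sum_reductionGroups_eq_y hPf hxinj hxy hxd hyd htn (mem_univ _)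
      (by simpa using hS)]
  refine scoringRule_sum_reductionGroups_eq_y hPf hxinj hxy hxd hyd htn
    (mem_sdiff.mpr ⟨mem_univ _, hkept _ (mem_insert_self _ _)⟩) fun j => ?_
  obtain ⟨i, hi⟩ := hWhit j
  obtain ⟨hiW, hiS⟩ := mem_inter.mp hi
  exact ⟨i, by simpa [hiS] using hkept _ (mem_insert_of_mem (mem_map_of_mem _ hiW))⟩

end Reduction

theorem stmt6_general (n t : ℕ) (S : Fin t → Finset (Fin n)) (hS : ∀ j, (S j).Nonempty)
    (k : ℕ) (hkn : k ≤ n)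
    {C : Type}
    (x : Fin t → C) (hxinj : Function.Injective x) (y d : C) (hyd : y ≠ d)
    (hxy : ∀ j, x j ≠ y) (hxd : ∀ j, x j ≠ d)
    (α : Fin (t + 2) → ℝ)
    (Pf : C → C → Multiset (Vote C (t + 2)))
    (hPf : ∀ u v : C, u ≠ v → PfGood α (Pf u v) u v) :
    DefenseYes (scoringRule α)
      (Fin.snoc
        (fun i : Fin n => ∑ j ∈ Finset.univ.filter (fun j => i ∈ S j), 2 • Pf (x j) d)
        ((∑ j, (2 * t * n) • Pf d (x j)) + (2 * t * n - 1) • Pf d y))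
      n (k + 1) ↔
    ∃ W : Finset (Fin n), W.card = k ∧ ∀ j, (W ∩ S j).Nonempty := by
  classical
  rcases Nat.eq_zero_or_pos t with rfl | ht
  -- with `t = 0` every group is empty (`2 * 0 * n - 1 = 0` in `ℕ`)
  · refine iff_of_true (DefenseYes.of_forall_eq_zero _ (fun i => ?_) _ _) ?_
    · induction i using Fin.lastCases <;> simp
    · obtain ⟨W, -, hW⟩ := exists_subset_card_eq (s := (univ : Finset (Fin n))) (by simpa)
      exact ⟨W, hW, fun j => j.elim0⟩
  obtain ⟨i, -⟩ := hS ⟨0, ht⟩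
  exact ⟨exists_hittingSet_of_defenseYes hS hPf hxinj hxy hxd hyd ht i.pos hkn,
    defenseYes_of_exists_hittingSet hS hPf hxinj hxy hxd hyd (Nat.mul_pos ht i.pos)⟩

/-- the Hitting Set reduction instance for Optimal Defense under a
scoring rule. -/
theorem stmt6 (n t : ℕ) (S : Fin t → Finset (Fin n)) (hS : ∀ j, (S j).Nonempty)
    (k : ℕ) (hk : 0 < k) (hkn : k ≤ n)
    {C : Type} [Fintype C] [DecidableEq C] (hC : Fintype.card C = t + 2)
    (x : Fin t → C) (hxinj : Function.Injective x) (y d : C) (hyd : y ≠ d)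
    (hxy : ∀ j, x j ≠ y) (hxd : ∀ j, x j ≠ d)
    (α : Fin (t + 2) → ℝ) (hmono : IsMonotoneScore α) (hnorm : IsNormalized α)
    (Pf : C → C → Multiset (Vote C (t + 2)))
    (hPf : ∀ u v : C, u ≠ v → PfGood α (Pf u v) u v) :
    DefenseYes (scoringRule α)
      (Fin.snoc
        (fun i : Fin n => ∑ j ∈ Finset.univ.filter (fun j => i ∈ S j), 2 • Pf (x j) d)
        ((∑ j, (2 * t * n) • Pf d (x j)) + (2 * t * n - 1) • Pf d y))
      n (k + 1) ↔
    ∃ W : Finset (Fin n), W.card = k ∧ ∀ j, (W ∩ S j).Nonempty :=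
  stmt6_general n t S hS k hkn x hxinj y d hyd hxy hxd α Pf hPf
end
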